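/- For every s ≥ 1 and every j with 0 ≤ j ≤ 2^s − 1, ω(d_{2^s + j}) = 2·ω(d_j); equivalently, δ_{2^s + j} = δ_j + 1 where δ_m = log_2(ω(d_m)). -/

import Mathlib

/-- `Z a b = a*b / gcd(a,b)^2`. -/
def Zfun (a b : ℕ) : ℕ := a * b / Nat.gcd a b ^ 2

/-- The array: `ent 0 n` is the `n`-th prime (0-indexed), and
`ent (m+1) n = Z (ent m n) (ent m (n+1))`. -/
noncomputable def ent : ℕ → ℕ → ℕ
  | 0, n => Nat.nth Nat.Prime n
  | m + 1, n => Zfun (ent m n) (ent m (n + 1))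

/-- The left edge `d_m`. -/
noncomputable def dseq (m : ℕ) : ℕ := ent m 0

/-!
For squarefree `a` and `b`, `Z(a, b)` is squarefree and its prime factors are the symmetric
difference of those of `a` and `b`. Since Pascal's rule reads `C(m+1, k+1) ≡ C(m, k) + C(m, k+1)`
mod 2, induction on `m` shows that `a_{m,n}` is the product of the primes `p_{n+k}` over the `k`
with `C(m, k)` odd; so `ω(d_m)` is the number of odd entries in row `m` of Pascal's triangle.
By Lucas's theorem, for `j, r < 2^s` and `q ∈ {0, 1}` we have
`C(2^s + j, 2^s q + r) ≡ C(j, r) * C(1, q) = C(j, r)` mod 2: row `2^s + j` consists of two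
copies of row `j`.
-/

open Finset Nat
open scoped symmDiff

lemma Zfun_eq_div_gcd_mul_div_gcd (a b : ℕ) : Zfun a b = a / a.gcd b * (b / a.gcd b) := by
  rw [Zfun, sq, Nat.div_mul_div_comm (Nat.gcd_dvd_left a b) (Nat.gcd_dvd_right a b)]

lemma squarefree_Zfun {a b : ℕ} (ha : Squarefree a) (hb : Squarefree b) :
    Squarefree (Zfun a b) := by
  rw [Zfun_eq_div_gcd_mul_div_gcd, Nat.squarefree_mul_iff]
  exact ⟨coprime_div_gcd_div_gcd (gcd_pos_of_pos_left b ha.ne_zero.bot_lt),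
    ha.squarefree_of_dvd (div_dvd_of_dvd (Nat.gcd_dvd_left a b)),
    hb.squarefree_of_dvd (div_dvd_of_dvd (Nat.gcd_dvd_right a b))⟩

lemma primeFactors_Zfun {a b : ℕ} (ha : Squarefree a) (hb : Squarefree b) :
    (Zfun a b).primeFactors = a.primeFactors ∆ b.primeFactors := by
  have ha' := ha.squarefree_of_dvd (div_dvd_of_dvd (Nat.gcd_dvd_left a b))
  have hb' := hb.squarefree_of_dvd (div_dvd_of_dvd (Nat.gcd_dvd_right a b))
  rw [Zfun_eq_div_gcd_mul_div_gcd, primeFactors_mul ha'.ne_zero hb'.ne_zero,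
    primeFactors_div_gcd ha hb.ne_zero, gcd_comm,
    primeFactors_div_gcd hb ha.ne_zero, symmDiff_def, sup_eq_union]

lemma squarefree_ent (m n : ℕ) : Squarefree (ent m n) := by
  induction m generalizing n with
  | zero => exact (prime_nth_prime n).squarefree
  | succ m ih => exact squarefree_Zfun (ih n) (ih (n + 1))

lemma le_of_odd_choose {m k : ℕ} (h : Odd (m.choose k)) : k ≤ m :=
  not_lt.mp (choose_eq_zero_iff.not.mp h.pos.ne')

def oddChoose (m : ℕ) : Finset ℕ := {k ∈ range (m + 1) | Odd (m.choose k)}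

lemma mem_oddChoose {m k : ℕ} : k ∈ oddChoose m ↔ Odd (m.choose k) := by
  rw [oddChoose, mem_filter, mem_range, and_iff_right_iff_imp]
  exact fun hodd => Nat.lt_succ_of_le (le_of_odd_choose hodd)

lemma oddChoose_eq_filter_range {m N : ℕ} (hmN : m < N) :
    oddChoose m = {k ∈ range N | Odd (m.choose k)} := by
  ext k
  rw [mem_oddChoose, mem_filter, mem_range]
  exact ⟨fun hodd => ⟨(le_of_odd_choose hodd).trans_lt hmN, hodd⟩, And.right⟩

lemma mem_map_oddChoose {m n t : ℕ} :
    t ∈ (oddChoose m).map (addLeftEmbedding n) ↔ n ≤ t ∧ Odd (m.choose (t - n)) := by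
  simp only [mem_map, mem_oddChoose, addLeftEmbedding_apply]
  constructor
  · rintro ⟨k, hk, rfl⟩
    simpa using hk
  · rintro ⟨hnt, hodd⟩
    exact ⟨t - n, hodd, Nat.add_sub_cancel' hnt⟩

lemma map_oddChoose_succ (m n : ℕ) :
    (oddChoose (m + 1)).map (addLeftEmbedding n) =
      (oddChoose m).map (addLeftEmbedding n) ∆ (oddChoose m).map (addLeftEmbedding (n + 1)) := by
  ext t
  rw [mem_symmDiff, mem_map_oddChoose, mem_map_oddChoose, mem_map_oddChoose]
  rcases lt_trichotomy t n with htn | rfl | hnt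
  · omega
  · simp
  · obtain ⟨i, rfl⟩ := Nat.exists_eq_add_of_lt hnt
    rw [show n + i + 1 - n = i + 1 by omega, show n + i + 1 - (n + 1) = i by omega,
      choose_succ_succ', Nat.odd_add, ← Nat.not_odd_iff_even]
    simp only [show n ≤ n + i + 1 by omega, show n + 1 ≤ n + i + 1 by omega, true_and]
    tauto

lemma primeFactors_ent (m n : ℕ) :
    (ent m n).primeFactors = ((oddChoose m).map (addLeftEmbedding n)).image (nth Nat.Prime) := by
  induction m generalizing n with
  | zero =>
    rw [ent, (prime_nth_prime n).primeFactors, show oddChoose 0 = {0} from rfl, map_singleton,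
      image_singleton, addLeftEmbedding_apply, add_zero]
  | succ m ih =>
    rw [ent, primeFactors_Zfun (squarefree_ent m n) (squarefree_ent m (n + 1)), ih, ih,
      ← image_symmDiff _ _ (nth_injective infinite_setOfPred_prime), map_oddChoose_succ]

lemma card_primeFactors_ent (m n : ℕ) : (ent m n).primeFactors.card = (oddChoose m).card := by
  rw [primeFactors_ent, card_image_of_injective _ (nth_injective infinite_setOfPred_prime), card_map]

theorem Choose.choose_modEq_choose_mod_pow_mul_choose_div_pow_nat {p n k : ℕ} [Fact p.Prime]
    (a : ℕ) :
    n.choose k ≡ (n % p ^ a).choose (k % p ^ a) * (n / p ^ a).choose (k / p ^ a) [MOD p] := by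
  have hpa : 0 < p ^ a := pow_pos (Fact.out : p.Prime).pos a
  have hdigit : ∀ m, ∀ i ∈ range a, m % p ^ a / p ^ i % p = m / p ^ i % p := fun m i hi => by
    obtain ⟨c, rfl⟩ := Nat.exists_eq_add_of_lt (mem_range.mp hi)
    rw [add_assoc, pow_add, Nat.mod_mul_right_div_self,
      Nat.mod_mod_of_dvd _ (dvd_pow_self p c.succ_ne_zero)]
  rw [← Int.natCast_modEq_iff, Nat.cast_mul, mul_comm]
  refine (Choose.choose_modEq_choose_mul_prod_range_choose a).trans ?_
  gcongr
  refine Int.ModEq.symm ?_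
  refine (Choose.choose_modEq_prod_range_choose (Nat.mod_lt _ hpa) (Nat.mod_lt _ hpa)).trans ?_
  rw [prod_congr rfl fun i hi => by rw [hdigit n i hi, hdigit k i hi], Nat.cast_prod]

lemma odd_choose_two_pow_add {s j q r : ℕ} (hj : j < 2 ^ s) (hq : q ≤ 1) (hr : r < 2 ^ s) :
    Odd ((2 ^ s + j).choose (2 ^ s * q + r)) ↔ Odd (j.choose r) := by
  have hlucas := Choose.choose_modEq_choose_mod_pow_mul_choose_div_pow_nat (p := 2)
    (n := 2 ^ s + j) (k := 2 ^ s * q + r) s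
  have hpos : 0 < 2 ^ s := Nat.two_pow_pos s
  have hq1 : Nat.choose 1 q = 1 := by interval_cases q <;> rfl
  rw [Nat.add_mod_left, Nat.mod_eq_of_lt hj, Nat.mul_add_mod_self_left,
    Nat.mod_eq_of_lt hr, Nat.add_div_left _ hpos, Nat.div_eq_of_lt hj, Nat.mul_add_div hpos,
    Nat.div_eq_of_lt hr, add_zero, zero_add, hq1] at hlucas
  rw [Nat.odd_iff, Nat.odd_iff, hlucas, mul_one]

lemma card_oddChoose_two_pow_add {s j : ℕ} (hj : j < 2 ^ s) :
    (oddChoose (2 ^ s + j)).card = 2 * (oddChoose j).card := by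
  rw [oddChoose_eq_filter_range (show 2 ^ s + j < 2 ^ s + 2 ^ s by omega),
    oddChoose_eq_filter_range hj, card_filter, card_filter, sum_range_add, two_mul]
  congr 1 <;> refine sum_congr rfl fun r hr => ?_
  · exact if_congr (by simpa using odd_choose_two_pow_add hj zero_le_one (mem_range.mp hr)) rfl rfl
  · exact if_congr (by simpa using odd_choose_two_pow_add hj le_rfl (mem_range.mp hr)) rfl rfl

theorem omega_d_doubling_general (s j : ℕ) (hj : j ≤ 2 ^ s - 1) :
    (dseq (2 ^ s + j)).primeFactors.card = 2 * (dseq j).primeFactors.card := by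
  have hj' : j < 2 ^ s := by have := Nat.two_pow_pos s; omega
  rw [dseq, dseq, card_primeFactors_ent, card_primeFactors_ent, card_oddChoose_two_pow_add hj']

theorem omega_d_doubling (s j : ℕ) (hs : 1 ≤ s) (hj : j ≤ 2 ^ s - 1) :
    (dseq (2 ^ s + j)).primeFactors.card = 2 * (dseq j).primeFactors.card :=
  omega_d_doubling_general s j hj
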